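/- Let g = f₁ · conj(f₂) where f₁, f₂ are invertible elements of H^∞, and let R_n h = T_g h + Σ_{i=1}^n ⟨h, u_i⟩ v_i with {u_i} orthonormal, {v_i} orthogonal in H^2. Then Ker R_n is nearly S*-invariant with defect at most n, with defect space F = span{T_{f₁^{-1}} T_{conj(f₂)^{-1}}(S* v_i) : 1 ≤ i ≤ n}. -/

import Mathlib

open MeasureTheory Complex Real ComplexConjugate
open scoped ENNReal

noncomputable section

instance : Fact (0 < 2 * π) := ⟨by positivity⟩

/-- The unit circle, modelled as `ℝ / 2πℤ`. -/
abbrev UnitCircle : Type := AddCircle (2 * π)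

/-- Normalized Haar (Lebesgue) measure on the circle. -/
abbrev μc : Measure UnitCircle := AddCircle.haarAddCircle

/-- The space `L²(𝕋)`. -/
abbrev L2T : Type := Lp ℂ 2 μc

/-- The Hardy space `H²`, the closed span of `{eⁱⁿᵗ : n ≥ 0}` inside `L²(𝕋)`. -/
def H2 : Submodule ℂ L2T :=
  (Submodule.span ℂ (Set.range fun n : ℕ => (fourierLp 2 (n : ℤ) : L2T))).topologicalClosure

instance : CompleteSpace H2 :=
  IsClosed.completeSpace_coe (hs := Submodule.isClosed_topologicalClosure _)

/-- The orthogonal projection `P : L²(𝕋) → H²`. -/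
def PH2 : L2T →L[ℂ] H2 := H2.orthogonalProjectionOnto

/-- Multiplication of an `L²` function by an essentially bounded symbol. -/
def symbMul (g : UnitCircle → ℂ) (hg : MemLp g ∞ μc) (f : L2T) : L2T :=
  ((Lp.memLp f).smul (r := 2) hg).toLp (g • ⇑f)

/-- The Toeplitz operator `T_g f = P(gf)`, viewed as a map `L²(𝕋) → L²(𝕋)`
(its restriction to `H²` is the classical Toeplitz operator). -/
def Toeplitz (g : UnitCircle → ℂ) (hg : MemLp g ∞ μc) (f : L2T) : L2T :=
  (PH2 (symbMul g hg f) : L2T)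

/-- The boundary coordinate function `z = eⁱᵗ` on the circle. -/
def zfun : UnitCircle → ℂ := fun x => fourier 1 x

lemma zfun_memLinfty : MemLp zfun ∞ μc := by
  refine memLp_top_of_bound ((fourier 1).continuous.aestronglyMeasurable) 1 ?_
  filter_upwards with x
  simp [zfun, Circle.norm_coe]

lemma conj_zfun_memLinfty : MemLp (fun x => conj (zfun x)) ∞ μc := by
  refine memLp_top_of_bound (Continuous.aestronglyMeasurable (Complex.continuous_conj.comp ((fourier 1).continuous))) 1 ?_
  filter_upwards with x
  simp [zfun, Circle.norm_coe]

/-- The backward shift `S* = T_{z̄}` on `L²`; its restriction to `H²` is the classical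
backward shift `(S^*f)(z) = (f(z)-f(0))/z`. -/
def Sstar (f : L2T) : L2T := Toeplitz (fun x => conj (zfun x)) conj_zfun_memLinfty f

/-- Evaluation of (the analytic extension of) `f` at the origin: the mean value `f(0) = ∫ f`. -/
def ev0 (f : L2T) : ℂ := ∫ x, f x ∂μc

/-- The constant function `1` as an element of `L²(𝕋)` (it is `e⁰`). -/
def onefun : L2T := fourierLp 2 (0 : ℤ)

lemma zpow_memLinfty (m : ℕ) : MemLp (fun x => zfun x ^ m) ∞ μc := by
  refine memLp_top_of_bound (Continuous.aestronglyMeasurable (by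
    exact Continuous.pow (fourier 1).continuous m)) 1 ?_
  filter_upwards with x
  simp [zfun, Circle.norm_coe]

/-- An essentially bounded symbol is in particular square-integrable: the associated `L²`
element. -/
def toL2 (g : UnitCircle → ℂ) (hg : MemLp g ∞ μc) : L2T :=
  (hg.mono_exponent le_top).toLp g

/-- A bounded symbol `g` is *analytic* (i.e. belongs to `H^∞`) iff multiplication by `g`
preserves the Hardy space `H²`. -/
def IsAnalytic (g : UnitCircle → ℂ) (hg : MemLp g ∞ μc) : Prop :=
  ∀ f : L2T, f ∈ H2 → symbMul g hg f ∈ H2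

/-- A bounded symbol is *inner* if it is analytic and unimodular a.e. on the circle. -/
def IsInner (g : UnitCircle → ℂ) (hg : MemLp g ∞ μc) : Prop :=
  IsAnalytic g hg ∧ ∀ᵐ x ∂μc, ‖g x‖ = 1

/-- The subspace `θ·H²` of `L²(𝕋)`. -/
def mulH2 (θ : UnitCircle → ℂ) (hθ : MemLp θ ∞ μc) : Submodule ℂ L2T :=
  Submodule.span ℂ {f : L2T | ∃ h ∈ H2, f = symbMul θ hθ h}

/-- The model space `K_θ = H² ⊖ θH²`. -/
def Kmodel (θ : UnitCircle → ℂ) (hθ : MemLp θ ∞ μc) : Submodule ℂ L2T :=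
  H2 ⊓ (mulH2 θ hθ)ᗮ

instance (θ : UnitCircle → ℂ) (hθ : MemLp θ ∞ μc) : CompleteSpace (Kmodel θ hθ) := by
  refine IsClosed.completeSpace_coe (hs := ?_)
  have : ((Kmodel θ hθ : Submodule ℂ L2T) : Set L2T)
      = (H2 : Set L2T) ∩ ((mulH2 θ hθ)ᗮ : Set L2T) := rfl
  rw [this]
  exact (Submodule.isClosed_topologicalClosure _).inter (Submodule.isClosed_orthogonal _)

/-- An element `u ∈ H²` is *outer* if the polynomial multiples of `u` are dense in `H²`
(Beurling). -/
def IsOuterL2 (uL : L2T) : Prop :=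
  (Submodule.span ℂ
    (Set.range fun n : ℕ => symbMul (fun x => zfun x ^ n) (zpow_memLinfty n) uL)).topologicalClosure
    = H2

open scoped ComplexInnerProductSpace

instance (U : Submodule ℂ L2T) : CompleteSpace (H2 ⊓ Uᗮ : Submodule ℂ L2T) := by
  refine IsClosed.completeSpace_coe (hs := ?_)
  have : ((H2 ⊓ Uᗮ : Submodule ℂ L2T) : Set L2T) = (H2 : Set L2T) ∩ (Uᗮ : Set L2T) := rfl
  rw [this]
  exact (Submodule.isClosed_topologicalClosure _).inter (Submodule.isClosed_orthogonal _)

section Aux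

lemma coe_symbMul (g : UnitCircle → ℂ) (hg : MemLp g ∞ μc) (f : L2T) :
    ⇑(symbMul g hg f) =ᵐ[μc] fun x => g x * f x := by
  exact MemLp.coeFn_toLp ((Lp.memLp f).smul (r := 2) hg)

/-- `symbMul` as a continuous linear map. -/
def symbMulL (g : UnitCircle → ℂ) (hg : MemLp g ∞ μc) : L2T →L[ℂ] L2T :=
  LinearMap.mkContinuous
    { toFun := fun f => symbMul g hg f
      map_add' := fun f f' => by
        apply Lp.ext
        filter_upwards [coe_symbMul g hg f, coe_symbMul g hg f', coe_symbMul g hg (f + f'),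
          Lp.coeFn_add f f', Lp.coeFn_add (symbMul g hg f) (symbMul g hg f')] with x h1 h2 h3 h4 h5
        simp only [h5, h3, Pi.add_apply, h4, h1, h2]
        ring
      map_smul' := fun c f => by
        apply Lp.ext
        filter_upwards [coe_symbMul g hg f, coe_symbMul g hg (c • f),
          Lp.coeFn_smul c f, Lp.coeFn_smul c (symbMul g hg f)] with x h1 h2 h3 h4
        simp only [RingHom.id_apply, h4, h2, Pi.smul_apply, h3, h1, smul_eq_mul]
        ring }
    (eLpNorm g ∞ μc).toReal
    (fun f => by
      simp only [LinearMap.coe_mk, AddHom.coe_mk]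
      unfold symbMul
      rw [MeasureTheory.Lp.norm_toLp, Lp.norm_def, ← ENNReal.toReal_mul]
      refine ENNReal.toReal_mono ?_ ?_
      · exact ENNReal.mul_ne_top hg.eLpNorm_ne_top (Lp.memLp f).eLpNorm_ne_top
      · exact eLpNorm_smul_le_eLpNorm_top_mul_eLpNorm 2 (Lp.aestronglyMeasurable f) g)

lemma symbMulL_apply (g : UnitCircle → ℂ) (hg : MemLp g ∞ μc) (f : L2T) :
    symbMulL g hg f = symbMul g hg f := rfl

lemma E_mem_H2 (n : ℕ) : (fourierLp 2 (n : ℤ) : L2T) ∈ H2 :=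
  Submodule.le_topologicalClosure _ (Submodule.subset_span ⟨n, rfl⟩)

lemma H2_isClosed : IsClosed (H2 : Set L2T) := Submodule.isClosed_topologicalClosure _

lemma H2_ext {F : Type*} [NormedAddCommGroup F] [NormedSpace ℂ F]
    (T : L2T →L[ℂ] F) (hT : ∀ n : ℕ, T (fourierLp 2 (n : ℤ)) = 0) :
    ∀ f ∈ H2, T f = 0 := by
  intro f hf
  have hle : H2 ≤ LinearMap.ker (T : L2T →ₗ[ℂ] F) := by
    unfold H2
    apply Submodule.topologicalClosure_minimal
    · rw [Submodule.span_le]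
      rintro y ⟨m, rfl⟩
      exact hT m
    · exact ContinuousLinearMap.isClosed_ker T
  exact hle hf

lemma H2_mapsTo (T : L2T →L[ℂ] L2T) (hT : ∀ n : ℕ, T (fourierLp 2 (n : ℤ)) ∈ H2) :
    ∀ f ∈ H2, T f ∈ H2 := by
  intro f hf
  have hle : H2 ≤ Submodule.comap (T : L2T →ₗ[ℂ] L2T) H2 := by
    conv_lhs => unfold H2
    apply Submodule.topologicalClosure_minimal
    · rw [Submodule.span_le]
      rintro y ⟨m, rfl⟩
      exact hT m
    · exact H2_isClosed.preimage T.continuous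
  exact hle hf

lemma mem_H2_orthogonal (y : L2T)
    (hy : ∀ n : ℕ, ⟪(fourierLp 2 (n : ℤ) : L2T), y⟫ = 0) : y ∈ H2ᗮ := by
  rw [Submodule.mem_orthogonal]
  intro w hw
  have h0 : ∀ f ∈ H2, innerSL ℂ y f = 0 := by
    refine H2_ext _ ?_
    intro m
    have : ⟪y, (fourierLp 2 (m : ℤ) : L2T)⟫ = 0 := by
      rw [← inner_conj_symm, hy m, map_zero]
    simpa using this
  have := h0 w hw
  simp only [innerSL_apply_apply] at this
  rw [← inner_conj_symm, this, map_zero]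

end Aux

section Aux2

lemma PH2_of_mem {x : L2T} (hx : x ∈ H2) : (PH2 x : L2T) = x :=
  H2.starProjection_eq_self_iff.2 hx

lemma PH2_of_orth {x : L2T} (hx : x ∈ H2ᗮ) : PH2 x = 0 :=
  H2.orthogonalProjectionOnto_apply_of_mem_orthogonal hx

lemma PH2_eq_of {x y : L2T} (hy : y ∈ H2) (hxy : x - y ∈ H2ᗮ) : (PH2 x : L2T) = y :=
  H2.eq_starProjection_of_mem_orthogonal hy hxy

lemma inner_symbMul (φ : UnitCircle → ℂ) (hφ : MemLp φ ∞ μc)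
    (hφc : MemLp (fun x => conj (φ x)) ∞ μc) (f y : L2T) :
    ⟪f, symbMul (fun x => conj (φ x)) hφc y⟫ = ⟪symbMul φ hφ f, y⟫ := by
  rw [MeasureTheory.L2.inner_def, MeasureTheory.L2.inner_def]
  refine integral_congr_ae ?_
  filter_upwards [coe_symbMul _ hφc y, coe_symbMul φ hφ f] with x hx1 hx2
  rw [hx1, hx2, RCLike.inner_apply, RCLike.inner_apply, map_mul]
  ring

lemma conj_symbMul_mem_orthogonal (φ : UnitCircle → ℂ) (hφ : MemLp φ ∞ μc)
    (hφc : MemLp (fun x => conj (φ x)) ∞ μc)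
    (hA : ∀ n : ℕ, symbMul φ hφ (fourierLp 2 (n : ℤ)) ∈ H2)
    {y : L2T} (hy : y ∈ H2ᗮ) : symbMul (fun x => conj (φ x)) hφc y ∈ H2ᗮ := by
  refine mem_H2_orthogonal _ fun n => ?_
  rw [inner_symbMul φ hφ hφc]
  exact (Submodule.mem_orthogonal H2 y).1 hy _ (hA n)

/-- `P (conj φ • P x) = P (conj φ • x)` for analytic `φ`. -/
lemma proj_symbMul_conj_proj (φ : UnitCircle → ℂ) (hφ : MemLp φ ∞ μc)
    (hφc : MemLp (fun x => conj (φ x)) ∞ μc)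
    (hA : ∀ n : ℕ, symbMul φ hφ (fourierLp 2 (n : ℤ)) ∈ H2) (x : L2T) :
    (PH2 (symbMul (fun t => conj (φ t)) hφc (PH2 x : L2T)) : L2T)
      = (PH2 (symbMul (fun t => conj (φ t)) hφc x) : L2T) := by
  have hmem : symbMul (fun t => conj (φ t)) hφc x
      - symbMul (fun t => conj (φ t)) hφc (PH2 x : L2T) ∈ H2ᗮ := by
    rw [← symbMulL_apply, ← symbMulL_apply, ← map_sub]
    exact conj_symbMul_mem_orthogonal φ hφ hφc hA (H2.sub_starProjection_mem_orthogonal x)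
  have h0 : PH2 (symbMul (fun t => conj (φ t)) hφc x
      - symbMul (fun t => conj (φ t)) hφc (PH2 x : L2T)) = 0 := PH2_of_orth hmem
  rw [map_sub, sub_eq_zero] at h0
  exact_mod_cast congrArg (Subtype.val) h0.symm

lemma coe_onefun : ⇑(onefun : L2T) =ᵐ[μc] fun _ => (1 : ℂ) := by
  unfold onefun
  filter_upwards [coeFn_fourierLp 2 (0 : ℤ)] with x hx
  rw [hx]
  exact fourier_zero

lemma ev0_eq_inner (x : L2T) : ev0 x = ⟪(onefun : L2T), x⟫ := by
  rw [MeasureTheory.L2.inner_def, ev0]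
  refine integral_congr_ae ?_
  filter_upwards [coe_onefun] with a ha
  rw [RCLike.inner_apply, ha]
  simp

lemma inner_E (k l : ℤ) :
    ⟪(fourierLp 2 k : L2T), (fourierLp 2 l : L2T)⟫ = if k = l then 1 else 0 :=
  orthonormal_iff_ite.1 orthonormal_fourier k l

lemma ev0_E (k : ℤ) : ev0 (fourierLp 2 k : L2T) = if (0 : ℤ) = k then 1 else 0 := by
  rw [ev0_eq_inner]; exact inner_E 0 k

lemma Eneg_mem_orth {k : ℤ} (hk : k < 0) : (fourierLp 2 k : L2T) ∈ H2ᗮ := by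
  refine mem_H2_orthogonal _ fun n => ?_
  rw [inner_E]
  simp only [ite_eq_right_iff]
  intro h; omega

lemma symbMul_z_E (k : ℤ) :
    symbMul zfun zfun_memLinfty (fourierLp 2 k) = (fourierLp 2 (1 + k) : L2T) := by
  apply Lp.ext
  filter_upwards [coe_symbMul zfun zfun_memLinfty (fourierLp 2 k), coeFn_fourierLp 2 k,
    coeFn_fourierLp 2 (1 + k)] with x h1 h2 h3
  rw [h1, h2, h3]
  simp only [zfun]
  exact fourier_add.symm

lemma symbMul_zbar_E (k : ℤ) :
    symbMul (fun x => conj (zfun x)) conj_zfun_memLinfty (fourierLp 2 k)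
      = (fourierLp 2 (-1 + k) : L2T) := by
  apply Lp.ext
  filter_upwards [coe_symbMul _ conj_zfun_memLinfty (fourierLp 2 k), coeFn_fourierLp 2 k,
    coeFn_fourierLp 2 (-1 + k)] with x h1 h2 h3
  rw [h1, h2, h3]
  simp only [zfun]
  rw [fourier_add, fourier_neg]

lemma z_E_mem (n : ℕ) : symbMul zfun zfun_memLinfty (fourierLp 2 (n : ℤ)) ∈ H2 := by
  rw [symbMul_z_E, show (1 : ℤ) + (n : ℤ) = ((n + 1 : ℕ) : ℤ) by push_cast; ring]
  exact E_mem_H2 (n + 1)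

lemma toL2_eq_symbMul_onefun (φ : UnitCircle → ℂ) (hφ : MemLp φ ∞ μc) :
    toL2 φ hφ = symbMul φ hφ onefun := by
  apply Lp.ext
  have h0 : ⇑(toL2 φ hφ) =ᵐ[μc] φ := MemLp.coeFn_toLp _
  filter_upwards [h0, coe_symbMul φ hφ onefun, coe_onefun] with x h1 h2 h3
  rw [h1, h2, h3]
  simp

end Aux2

section Aux3

lemma ev0_symbMul_shift (φ : UnitCircle → ℂ) (hφ : MemLp φ ∞ μc) (n : ℕ) (hn : 1 ≤ n) :
    ev0 (symbMul φ hφ (fourierLp 2 (n : ℤ)))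
      = ⟪(fourierLp 2 (-1) : L2T), symbMul φ hφ (fourierLp 2 ((n : ℤ) - 1))⟫ := by
  rw [ev0, MeasureTheory.L2.inner_def]
  refine integral_congr_ae ?_
  filter_upwards [coe_symbMul φ hφ (fourierLp 2 (n : ℤ)),
    coe_symbMul φ hφ (fourierLp 2 ((n : ℤ) - 1)), coeFn_fourierLp 2 (n : ℤ),
    coeFn_fourierLp 2 ((n : ℤ) - 1), coeFn_fourierLp 2 (-1 : ℤ)] with a h1 h2 h3 h4 h5
  rw [h1, h3, RCLike.inner_apply, h5, h2, h4]
  have hc : conj (fourier (-1 : ℤ) a) = fourier (1 : ℤ) a := by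
    rw [← fourier_neg]; norm_num
  rw [hc, show (n : ℤ) = 1 + ((n : ℤ) - 1) by ring, fourier_add]
  ring

/-- Multiplicativity of evaluation at `0` for analytic symbols. -/
lemma ev0_symbMul_analytic (φ : UnitCircle → ℂ) (hφ : MemLp φ ∞ μc)
    (hA : ∀ f ∈ H2, symbMul φ hφ f ∈ H2) {x : L2T} (hx : x ∈ H2) :
    ev0 (symbMul φ hφ x) = ev0 (toL2 φ hφ) * ev0 x := by
  set c := ev0 (toL2 φ hφ) with hc
  have key : ∀ f ∈ H2,
      ((innerSL ℂ (onefun : L2T)).comp (symbMulL φ hφ)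
        - c • innerSL ℂ (onefun : L2T)) f = 0 := by
    refine H2_ext _ fun n => ?_
    simp only [ContinuousLinearMap.sub_apply, ContinuousLinearMap.coe_comp', Function.comp_apply,
      ContinuousLinearMap.smul_apply, innerSL_apply_apply, symbMulL_apply, smul_eq_mul]
    rw [← ev0_eq_inner, ← ev0_eq_inner, sub_eq_zero]
    rcases Nat.eq_zero_or_pos n with h | h
    · subst h
      rw [show ((0 : ℕ) : ℤ) = (0 : ℤ) by norm_num]
      have h1 : symbMul φ hφ (fourierLp 2 (0 : ℤ)) = toL2 φ hφ :=
        (toL2_eq_symbMul_onefun φ hφ).symm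
      rw [h1, ev0_E]
      simp [hc]
    · rw [ev0_symbMul_shift φ hφ n h, ev0_E]
      have hmem : symbMul φ hφ (fourierLp 2 ((n : ℤ) - 1)) ∈ H2 := by
        rw [show ((n : ℤ) - 1) = ((n - 1 : ℕ) : ℤ) by omega]
        exact hA _ (E_mem_H2 (n - 1))
      have horth : ⟪(fourierLp 2 (-1 : ℤ) : L2T), symbMul φ hφ (fourierLp 2 ((n : ℤ) - 1))⟫ = 0 :=
        (Submodule.mem_orthogonal' H2 _).1 (Eneg_mem_orth (by norm_num)) _ hmem
      rw [horth]
      have : ¬ ((0 : ℤ) = (n : ℤ)) := by omega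
      simp [this]
  have h0 := key x hx
  simp only [ContinuousLinearMap.sub_apply, ContinuousLinearMap.coe_comp', Function.comp_apply,
    ContinuousLinearMap.smul_apply, innerSL_apply_apply, symbMulL_apply, smul_eq_mul] at h0
  rw [← ev0_eq_inner, ← ev0_eq_inner] at h0
  linear_combination h0

/-- The key formula `P(z̄ • x) = z̄ • x - (ev0 x) • e₋₁` for `x ∈ H²`. -/
lemma proj_zbar_eq {x : L2T} (hx : x ∈ H2) :
    (PH2 (symbMul (fun t => conj (zfun t)) conj_zfun_memLinfty x) : L2T)
      = symbMul (fun t => conj (zfun t)) conj_zfun_memLinfty x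
        - (ev0 x) • (fourierLp 2 (-1 : ℤ) : L2T) := by
  refine PH2_eq_of ?_ ?_
  · -- membership in H2 via a continuous linear map
    set T : L2T →L[ℂ] L2T :=
      symbMulL (fun t => conj (zfun t)) conj_zfun_memLinfty
        - (innerSL ℂ (onefun : L2T)).smulRight (fourierLp 2 (-1 : ℤ) : L2T) with hT
    have happ : ∀ y : L2T, T y = symbMul (fun t => conj (zfun t)) conj_zfun_memLinfty y
        - (ev0 y) • (fourierLp 2 (-1 : ℤ) : L2T) := by
      intro y
      simp only [hT, ContinuousLinearMap.sub_apply, ContinuousLinearMap.smulRight_apply,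
        innerSL_apply_apply, symbMulL_apply]
      rw [← ev0_eq_inner]
    rw [← happ]
    refine H2_mapsTo T (fun n => ?_) x hx
    rw [happ, symbMul_zbar_E, ev0_E]
    rcases Nat.eq_zero_or_pos n with h | h
    · subst h
      simp only [Nat.cast_zero, add_zero]
      simp
    · rw [if_neg (by omega)]
      rw [show (-1 : ℤ) + (n : ℤ) = ((n - 1 : ℕ) : ℤ) by omega]
      simpa using E_mem_H2 (n - 1)
  · have : symbMul (fun t => conj (zfun t)) conj_zfun_memLinfty x
        - (symbMul (fun t => conj (zfun t)) conj_zfun_memLinfty x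
          - (ev0 x) • (fourierLp 2 (-1 : ℤ) : L2T))
        = (ev0 x) • (fourierLp 2 (-1 : ℤ) : L2T) := sub_sub_cancel _ _
    rw [this]
    exact Submodule.smul_mem _ _ (Eneg_mem_orth (by norm_num))

end Aux3


set_option maxHeartbeats 2000000 in
/-- For `g = f₁·conj f₂` with `f₁, f₂` invertible elements of `H^∞`, the kernel
of `Rₙh = T_g h + Σ ⟨h,uᵢ⟩vᵢ` is nearly `S*`-invariant with defect at most `n`, with defect
space `F = span{T_{f₁⁻¹} T_{conj f₂⁻¹}(S*vᵢ)}`. -/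
theorem kernel_perturbed_toeplitz_invertible_product_nearly_Sstar_invariant
    (n : ℕ) (f₁ f₂ f₁inv f₂inv : UnitCircle → ℂ)
    (h1 : MemLp f₁ ∞ μc) (h2 : MemLp f₂ ∞ μc)
    (h1i : MemLp f₁inv ∞ μc) (h2i : MemLp f₂inv ∞ μc)
    (ha1 : IsAnalytic f₁ h1) (ha2 : IsAnalytic f₂ h2)
    (ha1i : IsAnalytic f₁inv h1i) (ha2i : IsAnalytic f₂inv h2i)
    (hinv1 : ∀ᵐ x ∂μc, f₁ x * f₁inv x = 1) (hinv2 : ∀ᵐ x ∂μc, f₂ x * f₂inv x = 1)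
    (hg : MemLp (fun x => f₁ x * conj (f₂ x)) ∞ μc)
    (h2ic : MemLp (fun x => conj (f₂inv x)) ∞ μc)
    (u v : Fin n → L2T)
    (hu : ∀ i, u i ∈ H2) (huon : Orthonormal ℂ u)
    (hv : ∀ i, v i ∈ H2) (hvorth : ∀ i j, i ≠ j → ⟪v i, v j⟫ = 0) :
    Module.finrank ℂ
        (Submodule.span ℂ
          (Set.range fun i =>
            Toeplitz f₁inv h1i (Toeplitz (fun x => conj (f₂inv x)) h2ic (Sstar (v i))))) ≤ n
    ∧ ∀ h ∈ H2,
        (Toeplitz (fun x => f₁ x * conj (f₂ x)) hg h + ∑ i, ⟪u i, h⟫ • v i = 0) →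
        ev0 h = 0 →
        ∃ w ∈ Submodule.span ℂ
            (Set.range fun i =>
              Toeplitz f₁inv h1i (Toeplitz (fun x => conj (f₂inv x)) h2ic (Sstar (v i)))),
          Sstar h + w ∈ H2
          ∧ Toeplitz (fun x => f₁ x * conj (f₂ x)) hg (Sstar h + w)
              + ∑ i, ⟪u i, Sstar h + w⟫ • v i = 0 := by
  classical
  constructor
  · have := finrank_range_le_card (R := ℂ) fun i : Fin n =>
      Toeplitz f₁inv h1i (Toeplitz (fun x => conj (f₂inv x)) h2ic (Sstar (v i)))
    simpa [Set.finrank] using this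
  intro h hh heq hev
  set gfun : UnitCircle → ℂ := fun x => f₁ x * conj (f₂ x) with hgfun
  set c₂ : UnitCircle → ℂ := fun x => conj (f₂inv x) with hc₂
  set zb : UnitCircle → ℂ := fun x => conj (zfun x) with hzb
  set a : Fin n → ℂ := fun i => ⟪u i, h⟫ with ha
  set e : Fin n → L2T := fun i => Toeplitz f₁inv h1i (Toeplitz c₂ h2ic (Sstar (v i))) with he
  set p : Fin n → L2T := fun i => (PH2 (symbMul c₂ h2ic (v i)) : L2T) with hp
  have hpH2 : ∀ i, p i ∈ H2 := fun i => (PH2 (symbMul c₂ h2ic (v i))).2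
  have hA2i : ∀ m : ℕ, symbMul f₂inv h2i (fourierLp 2 (m : ℤ)) ∈ H2 :=
    fun m => ha2i _ (E_mem_H2 m)
  -- Step 1 : T_g h = -∑ aᵢ • vᵢ
  have hT : Toeplitz gfun hg h = -∑ i, a i • v i := eq_neg_of_add_eq_zero_left heq
  -- Step 2 : h = -∑ aᵢ • (f₁⁻¹ • pᵢ)
  set B : L2T →L[ℂ] L2T :=
    H2.subtypeL.comp (PH2.comp ((symbMulL f₁inv h1i).comp
      (H2.subtypeL.comp (PH2.comp (symbMulL c₂ h2ic))))) with hB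
  have hBapp : ∀ y : L2T,
      B y = (PH2 (symbMul f₁inv h1i (PH2 (symbMul c₂ h2ic y) : L2T)) : L2T) := fun y => rfl
  have hBh : B (Toeplitz gfun hg h) = h := by
    rw [hBapp]
    have step1 : (PH2 (symbMul c₂ h2ic (Toeplitz gfun hg h)) : L2T)
        = (PH2 (symbMul c₂ h2ic (symbMul gfun hg h)) : L2T) := by
      rw [show Toeplitz gfun hg h = (PH2 (symbMul gfun hg h) : L2T) from rfl]
      exact proj_symbMul_conj_proj f₂inv h2i h2ic hA2i (symbMul gfun hg h)
    have step2 : symbMul c₂ h2ic (symbMul gfun hg h) = symbMul f₁ h1 h := by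
      apply Lp.ext
      filter_upwards [coe_symbMul c₂ h2ic (symbMul gfun hg h), coe_symbMul gfun hg h,
        coe_symbMul f₁ h1 h, hinv2] with x hx1 hx2 hx3 hx4
      rw [hx1, hx2, hx3]
      have hcc := congrArg (starRingEnd ℂ) hx4
      rw [map_mul, map_one] at hcc
      simp only [hc₂, hgfun]
      linear_combination (f₁ x * (h : L2T) x) * hcc
    have step3 : (PH2 (symbMul f₁ h1 h) : L2T) = symbMul f₁ h1 h := PH2_of_mem (ha1 h hh)
    have step4 : symbMul f₁inv h1i (symbMul f₁ h1 h) = h := by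
      apply Lp.ext
      filter_upwards [coe_symbMul f₁inv h1i (symbMul f₁ h1 h), coe_symbMul f₁ h1 h, hinv1]
        with x hx1 hx2 hx3
      rw [hx1, hx2]
      linear_combination ((h : L2T) x) * hx3
    rw [step1, step2, step3, step4]
    exact PH2_of_mem hh
  have hBv : ∀ i, B (v i) = symbMul f₁inv h1i (p i) := by
    intro i
    rw [hBapp]
    exact PH2_of_mem (ha1i _ (hpH2 i))
  set q : L2T := -∑ i, a i • p i with hq
  have hqH2 : q ∈ H2 :=
    Submodule.neg_mem _ (Submodule.sum_mem _ fun i _ => Submodule.smul_mem _ _ (hpH2 i))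
  have hfq : symbMul f₁inv h1i q = h := by
    have hsum : B (-∑ i, a i • v i) = -∑ i, a i • symbMul f₁inv h1i (p i) := by
      rw [map_neg, map_sum]
      congr 1
      refine Finset.sum_congr rfl fun i _ => ?_
      rw [_root_.map_smul, hBv i]
    rw [← symbMulL_apply, hq, map_neg, map_sum]
    have : ∀ i, symbMulL f₁inv h1i (a i • p i) = a i • symbMul f₁inv h1i (p i) := fun i => by
      rw [_root_.map_smul, symbMulL_apply]
    simp_rw [this]
    rw [← hsum, ← hT, hBh]
  -- Step 3 : ev0 q = 0
  have hc₁ : ev0 (toL2 f₁inv h1i) ≠ 0 := by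
    have htm : toL2 f₁ h1 ∈ H2 := by
      rw [toL2_eq_symbMul_onefun]
      have := ha1 _ (E_mem_H2 0)
      simpa [onefun] using this
    have hmul := ev0_symbMul_analytic f₁inv h1i (fun f hf => ha1i f hf) htm
    have h11 : symbMul f₁inv h1i (toL2 f₁ h1) = onefun := by
      apply Lp.ext
      filter_upwards [coe_symbMul f₁inv h1i (toL2 f₁ h1), MemLp.coeFn_toLp
        (h1.mono_exponent le_top), coe_onefun, hinv1] with x hx1 hx2 hx3 hx4
      rw [hx1, hx3]
      have : ⇑(toL2 f₁ h1) x = f₁ x := hx2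
      rw [this]
      linear_combination hx4
    rw [h11] at hmul
    have hone : ev0 (onefun : L2T) = 1 := by
      have := ev0_E 0
      simpa [onefun] using this
    rw [hone] at hmul
    exact left_ne_zero_of_mul_eq_one hmul.symm
  have hevq : ev0 q = 0 := by
    have hmul := ev0_symbMul_analytic f₁inv h1i (fun f hf => ha1i f hf) hqH2
    rw [hfq, hev] at hmul
    rcases mul_eq_zero.1 hmul.symm with hcl | hql
    · exact absurd hcl hc₁
    · exact hql
  -- Step 4 : identify the generators
  have he_eq : ∀ i, e i = (PH2 (symbMul f₁inv h1i
      (symbMul zb conj_zfun_memLinfty (p i) - ev0 (p i) • (fourierLp 2 (-1 : ℤ) : L2T))) : L2T) := by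
    intro i
    have inner1 : Toeplitz c₂ h2ic (Sstar (v i))
        = (PH2 (symbMul c₂ h2ic (symbMul zb conj_zfun_memLinfty (v i))) : L2T) := by
      rw [show Sstar (v i) = (PH2 (symbMul zb conj_zfun_memLinfty (v i)) : L2T) from rfl]
      exact proj_symbMul_conj_proj f₂inv h2i h2ic hA2i _
    have inner2 : symbMul c₂ h2ic (symbMul zb conj_zfun_memLinfty (v i))
        = symbMul zb conj_zfun_memLinfty (symbMul c₂ h2ic (v i)) := by
      apply Lp.ext
      filter_upwards [coe_symbMul c₂ h2ic (symbMul zb conj_zfun_memLinfty (v i)),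
        coe_symbMul zb conj_zfun_memLinfty (v i),
        coe_symbMul zb conj_zfun_memLinfty (symbMul c₂ h2ic (v i)),
        coe_symbMul c₂ h2ic (v i)] with x hx1 hx2 hx3 hx4
      rw [hx1, hx2, hx3, hx4]
      ring
    have inner3 : (PH2 (symbMul zb conj_zfun_memLinfty (symbMul c₂ h2ic (v i))) : L2T)
        = (PH2 (symbMul zb conj_zfun_memLinfty (p i)) : L2T) :=
      (proj_symbMul_conj_proj zfun zfun_memLinfty conj_zfun_memLinfty z_E_mem
        (symbMul c₂ h2ic (v i))).symm
    have inner4 : (PH2 (symbMul zb conj_zfun_memLinfty (p i)) : L2T)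
        = symbMul zb conj_zfun_memLinfty (p i) - ev0 (p i) • (fourierLp 2 (-1 : ℤ) : L2T) :=
      proj_zbar_eq (hpH2 i)
    calc e i = (PH2 (symbMul f₁inv h1i (Toeplitz c₂ h2ic (Sstar (v i)))) : L2T) := rfl
      _ = _ := by rw [inner1, inner2, inner3, inner4]
  -- Step 5 : the defect vector kills S* h
  have hkey : Sstar h + ∑ i, a i • e i = 0 := by
    set C : L2T →L[ℂ] L2T := H2.subtypeL.comp (PH2.comp (symbMulL f₁inv h1i)) with hC
    have hCapp : ∀ y : L2T, C y = (PH2 (symbMul f₁inv h1i y) : L2T) := fun y => rfl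
    have hsum : ∑ i, a i • e i
        = C (∑ i, a i • (symbMulL zb conj_zfun_memLinfty (p i)
            - ev0 (p i) • (fourierLp 2 (-1 : ℤ) : L2T))) := by
      rw [map_sum]
      refine Finset.sum_congr rfl fun i _ => ?_
      rw [_root_.map_smul]
      congr 1
      rw [hCapp, symbMulL_apply]
      exact he_eq i
    have hev0sum : ∑ i, a i • (ev0 (p i) • (fourierLp 2 (-1 : ℤ) : L2T))
        = (ev0 (∑ i, a i • p i)) • (fourierLp 2 (-1 : ℤ) : L2T) := by
      have : ev0 (∑ i, a i • p i) = ∑ i, a i * ev0 (p i) := by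
        simp [ev0_eq_inner, inner_sum, inner_smul_right]
      rw [this, Finset.sum_smul]
      exact Finset.sum_congr rfl fun i _ => smul_smul _ _ _
    have hin : ∑ i, a i • (symbMulL zb conj_zfun_memLinfty (p i)
          - ev0 (p i) • (fourierLp 2 (-1 : ℤ) : L2T))
        = -(symbMulL zb conj_zfun_memLinfty q) := by
      simp_rw [smul_sub]
      rw [Finset.sum_sub_distrib, hev0sum]
      have h1' : ∑ i, a i • symbMulL zb conj_zfun_memLinfty (p i)
          = symbMulL zb conj_zfun_memLinfty (∑ i, a i • p i) := by
        rw [map_sum]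
        exact Finset.sum_congr rfl fun i _ => (_root_.map_smul _ _ _).symm
      have h2' : ev0 (∑ i, a i • p i) = 0 := by
        have : (∑ i, a i • p i) = -q := by rw [hq, neg_neg]
        rw [this]
        have : ev0 (-q) = -ev0 q := by
          simp [ev0_eq_inner, inner_neg_right]
        rw [this, hevq, neg_zero]
      rw [h1', h2', zero_smul, sub_zero, show (∑ i, a i • p i) = -q by rw [hq, neg_neg], map_neg]
    have hcomm : symbMul f₁inv h1i (symbMul zb conj_zfun_memLinfty q)
        = symbMul zb conj_zfun_memLinfty (symbMul f₁inv h1i q) := by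
      apply Lp.ext
      filter_upwards [coe_symbMul f₁inv h1i (symbMul zb conj_zfun_memLinfty q),
        coe_symbMul zb conj_zfun_memLinfty q,
        coe_symbMul zb conj_zfun_memLinfty (symbMul f₁inv h1i q),
        coe_symbMul f₁inv h1i q] with x hx1 hx2 hx3 hx4
      rw [hx1, hx2, hx3, hx4]
      ring
    rw [hsum, hin, map_neg, hCapp, symbMulL_apply, hcomm, hfq]
    rw [show Sstar h = (PH2 (symbMul zb conj_zfun_memLinfty h) : L2T) from rfl]
    exact add_neg_cancel _
  refine ⟨∑ i, a i • e i, ?_, ?_, ?_⟩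
  · exact Submodule.sum_mem _ fun i _ =>
      Submodule.smul_mem _ _ (Submodule.subset_span ⟨i, rfl⟩)
  · rw [hkey]
    exact H2.zero_mem
  · rw [hkey]
    have hz : Toeplitz gfun hg (0 : L2T) = 0 := by
      rw [show Toeplitz gfun hg (0 : L2T) = (PH2 (symbMul gfun hg 0) : L2T) from rfl,
        ← symbMulL_apply, map_zero, map_zero]
      rfl
    rw [hz, zero_add]
    refine Finset.sum_eq_zero fun i _ => ?_
    rw [inner_zero_right, zero_smul]
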